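/- Let n ≥ 1, G ∈ 𝒢_n, and 1 ≤ k ≤ n. The subgraph of G induced by the vertex set C(k,n) (all vertices at distance between k and n from source) is a disjoint union of exactly 2^k trees, each of which is a complete binary tree of height n − k. -/

import Mathlib

open Finset

noncomputable section

/-- Vertices of a complete binary tree of height `n`: a level `k ≤ n` and an index below `2^k`. -/
abbrev TV (n : ℕ) : Type := Σ k : Fin (n+1), Fin (2^(k : ℕ))

/-- Adjacency in a complete binary tree: one vertex is the parent of the other. -/
def treeAdj (n : ℕ) (a b : TV n) : Prop :=
  ((a.1 : ℕ) + 1 = (b.1 : ℕ) ∧ (b.2 : ℕ) / 2 = (a.2 : ℕ)) ∨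
  ((b.1 : ℕ) + 1 = (a.1 : ℕ) ∧ (a.2 : ℕ) / 2 = (b.2 : ℕ))

instance (n : ℕ) (a b : TV n) : Decidable (treeAdj n a b) := by
  unfold treeAdj; infer_instance

lemma treeAdj_symm (n : ℕ) : Symmetric (treeAdj n) := by
  intro a b h; unfold treeAdj at *; tauto

lemma treeAdj_irrefl (n : ℕ) (a : TV n) : ¬ treeAdj n a a := by
  unfold treeAdj; omega

/-- Vertices of a welded-trees graph: disjoint union of the two trees. -/
abbrev WTV (n : ℕ) : Type := TV n ⊕ TV n

def wtRoot (n : ℕ) : TV n := ⟨⟨0, Nat.succ_pos n⟩, ⟨0, by norm_num⟩⟩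

/-- The root of the left tree. -/
def wtSource (n : ℕ) : WTV n := Sum.inl (wtRoot n)

/-- The root of the right tree. -/
def wtTarget (n : ℕ) : WTV n := Sum.inr (wtRoot n)

instance (n : ℕ) : Inhabited (WTV n) := ⟨wtSource n⟩

/-- The index (among the `2^n` leaves of its tree) of a leaf. -/
def leafIdx {n : ℕ} (a : TV n) : Fin (2^n) := ⟨(a.2 : ℕ) % 2^n, Nat.mod_lt _ (by positivity)⟩

/-- Adjacency in the welded trees graph determined by the welding data `W`
(`W i j = true` iff the `i`-th left leaf is welded to the `j`-th right leaf). -/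
def weldedAdj (n : ℕ) (W : Fin (2^n) → Fin (2^n) → Bool) : WTV n → WTV n → Prop
  | Sum.inl a, Sum.inl b => treeAdj n a b
  | Sum.inr a, Sum.inr b => treeAdj n a b
  | Sum.inl a, Sum.inr b => (a.1 : ℕ) = n ∧ (b.1 : ℕ) = n ∧ W (leafIdx a) (leafIdx b) = true
  | Sum.inr b, Sum.inl a => (a.1 : ℕ) = n ∧ (b.1 : ℕ) = n ∧ W (leafIdx a) (leafIdx b) = true

/-- The welded trees graph determined by the welding data `W`. -/
def weldedGraph (n : ℕ) (W : Fin (2^n) → Fin (2^n) → Bool) : SimpleGraph (WTV n) where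
  Adj := weldedAdj n W
  symm := by
    refine ⟨?_⟩
    rintro (a|a) (b|b) h
    · exact treeAdj_symm n h
    · exact h
    · exact h
    · exact treeAdj_symm n h
  loopless := by
    refine ⟨?_⟩
    rintro (a|a) h
    · exact treeAdj_irrefl n a h
    · exact treeAdj_irrefl n a h

instance (n : ℕ) (W : Fin (2^n) → Fin (2^n) → Bool) : DecidableRel (weldedGraph n W).Adj := by
  rintro (a|a) (b|b)
  · exact inferInstanceAs (Decidable (treeAdj n a b))
  · exact inferInstanceAs (Decidable ((a.1 : ℕ) = n ∧ (b.1 : ℕ) = n ∧ W (leafIdx a) (leafIdx b) = true))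
  · exact inferInstanceAs (Decidable ((b.1 : ℕ) = n ∧ (a.1 : ℕ) = n ∧ W (leafIdx b) (leafIdx a) = true))
  · exact inferInstanceAs (Decidable (treeAdj n a b))

/-- The index of the column of a vertex: its distance to `source`. -/
def colIdx (n : ℕ) (W : Fin (2^n) → Fin (2^n) → Bool) (v : WTV n) : ℕ :=
  (weldedGraph n W).dist (wtSource n) v

/-- The `k`-th column: vertices at distance `k` from `source`. -/
def column (n : ℕ) (W : Fin (2^n) → Fin (2^n) → Bool) (k : ℕ) : Set (WTV n) :=
  {v | colIdx n W v = k}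

/-- The bipartite graph on the leaves of the two trees given by the welding edges. -/
def weldGraphLeaves (n : ℕ) (W : Fin (2^n) → Fin (2^n) → Bool) :
    SimpleGraph (Fin (2^n) ⊕ Fin (2^n)) where
  Adj x y := (∃ i j, x = Sum.inl i ∧ y = Sum.inr j ∧ W i j = true) ∨
             (∃ i j, x = Sum.inr j ∧ y = Sum.inl i ∧ W i j = true)
  symm := by
    refine ⟨?_⟩
    rintro x y (⟨i, j, hx, hy, h⟩ | ⟨i, j, hx, hy, h⟩)
    · exact Or.inr ⟨i, j, hy, hx, h⟩
    · exact Or.inl ⟨i, j, hy, hx, h⟩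
  loopless := by
    refine ⟨?_⟩
    rintro x (⟨i, j, hx, hy, h⟩ | ⟨i, j, hx, hy, h⟩) <;> subst hx <;> simp_all

/-- `W` is a valid welding datum: every leaf is welded to exactly two leaves of the other
tree, and the welding edges form a single cycle (equivalently, the 2-regular bipartite
welding graph on the `2^{n+1}` leaves is connected). -/
def IsWeldedData (n : ℕ) (W : Fin (2^n) → Fin (2^n) → Bool) : Prop :=
  (∀ i : Fin (2^n), (univ.filter (fun j => W i j = true)).card = 2) ∧
  (∀ j : Fin (2^n), (univ.filter (fun i => W i j = true)).card = 2) ∧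
  (weldGraphLeaves n W).Connected

end
noncomputable section

/-- The complete binary tree of height `m`, as a simple graph. -/
def cbtGraph (m : ℕ) : SimpleGraph (TV m) where
  Adj := treeAdj m
  symm := ⟨fun a b h => treeAdj_symm m h⟩
  loopless := ⟨fun a => treeAdj_irrefl m a⟩

/-- The union of the columns `C(k), …, C(k')`. -/
def columnUnion (n : ℕ) (W : Fin (2^n) → Fin (2^n) → Bool) (k k' : ℕ) : Set (WTV n) :=
  {v | k ≤ colIdx n W v ∧ colIdx n W v ≤ k'}

end

/-!
A path from `source` reaches the right tree only through a weld edge between leaves, so a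
right-tree vertex at level `j` lies in column `2n + 1 - j > n`, while a left-tree vertex at level
`j` lies in column `j`. Hence `C(k, n)` is the left tree with its top `k` levels removed, which
falls apart into the `2^k` subtrees below the level-`k` vertices. The component of a vertex is
named by the index of its level-`k` ancestor (the leading `k` binary digits of its index), and
dropping those digits identifies each component with the complete binary tree of height `n - k`.
-/

namespace SimpleGraph

variable {V β : Type*}

theorem exists_walk_length_eq_of_descent (G : SimpleGraph V) (f : V → ℕ)
    (hf : ∀ v, 0 < f v → ∃ u, G.Adj v u ∧ f u + 1 = f v) (v : V) :
    ∃ u, f u = 0 ∧ ∃ p : G.Walk v u, p.length = f v := by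
  induction hv : f v generalizing v with
  | zero => exact ⟨v, hv, .nil, rfl⟩
  | succ m ih =>
    obtain ⟨u, hadj, hu⟩ := hf v (by omega)
    obtain ⟨w, hw, p, hp⟩ := ih u (by omega)
    exact ⟨w, hw, .cons hadj p, by simp [hp]⟩

noncomputable def connectedComponentEquivOfReachableIff {G : SimpleGraph V} (f : V → β)
    (hf : f.Surjective) (h : ∀ u v, G.Reachable u v ↔ f u = f v) :
    G.ConnectedComponent ≃ β :=
  .ofBijective (ConnectedComponent.lift f fun u v p _ => (h u v).1 ⟨p⟩)
    ⟨fun c d hcd => by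
      induction c using ConnectedComponent.ind
      induction d using ConnectedComponent.ind
      exact ConnectedComponent.sound ((h _ _).2 hcd),
     fun b => (hf b).elim fun v hv => ⟨G.connectedComponentMk v, hv⟩⟩

theorem connectedComponentEquivOfReachableIff_mk {G : SimpleGraph V} {f : V → β}
    {hf : f.Surjective} {h : ∀ u v, G.Reachable u v ↔ f u = f v} (v : V) :
    connectedComponentEquivOfReachableIff f hf h (G.connectedComponentMk v) = f v :=
  rfl

theorem mem_supp_iff_eq_connectedComponentEquivOfReachableIff {G : SimpleGraph V} {f : V → β}
    {hf : f.Surjective} {h : ∀ u v, G.Reachable u v ↔ f u = f v} (c : G.ConnectedComponent)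
    (v : V) : v ∈ c.supp ↔ f v = connectedComponentEquivOfReachableIff f hf h c := by
  rw [ConnectedComponent.mem_supp_iff,
    ← connectedComponentEquivOfReachableIff_mk (hf := hf) (h := h),
    (connectedComponentEquivOfReachableIff f hf h).apply_eq_iff_eq]

end SimpleGraph

open SimpleGraph

namespace TV

variable {m : ℕ}

theorem ext {a b : TV m} (h1 : (a.1 : ℕ) = b.1) (h2 : (a.2 : ℕ) = b.2) : a = b :=
  Sigma.ext (Fin.ext h1) ((Fin.heq_ext_iff (by rw [h1])).2 h2)

theorem eq_wtRoot {a : TV m} (h : (a.1 : ℕ) = 0) : a = wtRoot m := by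
  obtain ⟨⟨j, hj⟩, ⟨i, hi⟩⟩ := a
  obtain rfl : j = 0 := h
  simp only [pow_zero, Nat.lt_one_iff] at hi
  exact ext rfl hi

/-- At the root this is the root itself. -/
def parent (a : TV m) : TV m :=
  ⟨⟨a.1 - 1, by omega⟩, ⟨a.2 / 2, by
    rw [Nat.div_lt_iff_lt_mul two_pos, ← pow_succ]
    exact a.2.isLt.trans_le (Nat.pow_le_pow_right two_pos (by dsimp only; omega))⟩⟩

def child (a : TV m) (h : (a.1 : ℕ) < m) : TV m :=
  ⟨⟨a.1 + 1, by omega⟩, ⟨2 * a.2, by have := a.2.isLt; simp only [pow_succ']; omega⟩⟩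

theorem treeAdj_parent {a : TV m} (h : 0 < (a.1 : ℕ)) : treeAdj m a (parent a) :=
  Or.inr ⟨by simp [parent]; omega, rfl⟩

theorem treeAdj_child (a : TV m) (h : (a.1 : ℕ) < m) : treeAdj m a (child a h) :=
  Or.inl ⟨rfl, by simp [child]⟩

theorem exists_walk_to_root (a : TV m) :
    ∃ p : (cbtGraph m).Walk a (wtRoot m), p.length = a.1 := by
  obtain ⟨u, hu, p, hp⟩ := (cbtGraph m).exists_walk_length_eq_of_descent (fun a => a.1)
    (fun a ha => ⟨parent a, treeAdj_parent ha, by simp [parent]; omega⟩) a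
  exact eq_wtRoot hu ▸ ⟨p, hp⟩

theorem exists_walk_to_leaf (a : TV m) :
    ∃ b : TV m, (b.1 : ℕ) = m ∧ ∃ p : (cbtGraph m).Walk a b, p.length = m - a.1 := by
  obtain ⟨b, hb, hp⟩ := (cbtGraph m).exists_walk_length_eq_of_descent (fun a => m - a.1)
    (fun a ha => ⟨child a (by omega), treeAdj_child a _, by simp [child]; omega⟩) a
  exact ⟨b, by have := b.1.isLt; omega, hp⟩

end TV

theorem Nat.mul_two_pow_add_lt {r x m k : ℕ} (hr : r < 2^k) (hx : x < 2^m) :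
    r * 2^m + x < 2^(m + k) :=
  calc r * 2^m + x < (r + 1) * 2^m := by rw [add_one_mul]; omega
    _ ≤ 2^k * 2^m := Nat.mul_le_mul_right _ hr
    _ = 2^(m + k) := by rw [pow_add, mul_comm]

/-- Being a parent/child pair of indices is unchanged by prefixing the common binary digits `r`. -/
theorem Nat.parent_step_shift_iff (m m' k r x y : ℕ) :
    (m + k + 1 = m' + k ∧ (r * 2^m' + y) / 2 = r * 2^m + x) ↔ (m + 1 = m' ∧ y / 2 = x) := by
  by_cases hm : m' = m + 1
  · subst hm
    rw [pow_succ, ← mul_assoc, add_comm (r * 2 ^ m * 2), Nat.add_mul_div_right _ _ two_pos]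
    omega
  · omega

namespace TV

variable {n k : ℕ}

def ancestorIdx (k : ℕ) (a : TV n) : Fin (2^k) :=
  ⟨a.2 / 2^((a.1 : ℕ) - k), by
    rw [Nat.div_lt_iff_lt_mul (by positivity), ← pow_add]
    exact a.2.isLt.trans_le (Nat.pow_le_pow_right two_pos (by omega))⟩

theorem ancestorIdx_parent {a : TV n} (hk : k < (a.1 : ℕ)) :
    ancestorIdx k (parent a) = ancestorIdx k a := by
  have hlev : (a.1 : ℕ) - k = ((a.1 : ℕ) - 1 - k) + 1 := by omega
  refine Fin.ext ?_
  simp only [ancestorIdx, parent, hlev, pow_succ', Nat.div_div_eq_div_mul]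

theorem ancestorIdx_eq_of_treeAdj {a b : TV n} (ha : k ≤ (a.1 : ℕ)) (hb : k ≤ (b.1 : ℕ))
    (h : treeAdj n a b) : ancestorIdx k a = ancestorIdx k b := by
  rcases h with ⟨h1, h2⟩ | ⟨h1, h2⟩
  · rw [← ancestorIdx_parent (by omega : k < (b.1 : ℕ)),
      ext (a := a) (b := parent b) (by simp [parent]; omega) h2.symm]
  · rw [← ancestorIdx_parent (by omega : k < (a.1 : ℕ)),
      ext (a := b) (b := parent a) (by simp [parent]; omega) h2.symm]

/-- `b` read as a vertex of the subtree of height `n - k` below the level-`k` vertex `r`. -/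
def embedSubtree (hk : k ≤ n) (r : Fin (2^k)) (b : TV (n - k)) : TV n :=
  ⟨⟨b.1 + k, by omega⟩,
    ⟨r * 2^(b.1 : ℕ) + b.2, Nat.mul_two_pow_add_lt r.isLt b.2.isLt⟩⟩

def posInSubtree (k : ℕ) (a : TV n) : TV (n - k) :=
  ⟨⟨a.1 - k, by omega⟩, ⟨a.2 % 2^((a.1 : ℕ) - k), Nat.mod_lt _ (by positivity)⟩⟩

theorem ancestorIdx_embedSubtree (hk : k ≤ n) (r : Fin (2^k)) (b : TV (n - k)) :
    ancestorIdx k (embedSubtree hk r b) = r := by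
  refine Fin.ext ?_
  simp only [ancestorIdx, embedSubtree, Nat.add_sub_cancel, mul_comm (r : ℕ),
    Nat.mul_add_div (by positivity : 0 < 2^(b.1 : ℕ)), Nat.div_eq_of_lt b.2.isLt, add_zero]

theorem posInSubtree_embedSubtree (hk : k ≤ n) (r : Fin (2^k)) (b : TV (n - k)) :
    posInSubtree k (embedSubtree hk r b) = b := by
  refine ext (by simp [posInSubtree, embedSubtree]) ?_
  simp only [posInSubtree, embedSubtree, Nat.add_sub_cancel, mul_comm (r : ℕ), Nat.mul_add_mod,
    Nat.mod_eq_of_lt b.2.isLt]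

theorem embedSubtree_posInSubtree (hk : k ≤ n) {a : TV n} (ha : k ≤ (a.1 : ℕ)) :
    embedSubtree hk (ancestorIdx k a) (posInSubtree k a) = a := by
  refine ext (by simp [posInSubtree, embedSubtree]; omega) ?_
  simp only [embedSubtree, ancestorIdx, posInSubtree]
  exact Nat.div_add_mod' _ _

theorem treeAdj_embedSubtree_iff (hk : k ≤ n) (r : Fin (2^k)) (b b' : TV (n - k)) :
    treeAdj n (embedSubtree hk r b) (embedSubtree hk r b') ↔ treeAdj (n - k) b b' :=
  or_congr (Nat.parent_step_shift_iff ..) (Nat.parent_step_shift_iff ..)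

end TV

section Welded

variable {n k : ℕ} {W : Fin (2^n) → Fin (2^n) → Bool}

theorem IsWeldedData.exists_weld_left (hW : IsWeldedData n W) (j : Fin (2^n)) :
    ∃ i, W i j = true := by
  obtain ⟨i, hi⟩ := Finset.card_pos.1 (by rw [hW.2.1 j]; exact two_pos)
  exact ⟨i, (Finset.mem_filter.1 hi).2⟩

def leftTreeHom (n : ℕ) (W : Fin (2^n) → Fin (2^n) → Bool) :
    cbtGraph n →g weldedGraph n W :=
  ⟨Sum.inl, id⟩

def rightTreeHom (n : ℕ) (W : Fin (2^n) → Fin (2^n) → Bool) :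
    cbtGraph n →g weldedGraph n W :=
  ⟨Sum.inr, id⟩

@[simp]
theorem weldedGraph_adj_inl_inl {a b : TV n} :
    (weldedGraph n W).Adj (Sum.inl a) (Sum.inl b) ↔ treeAdj n a b :=
  .rfl

def columnOf (n : ℕ) : WTV n → ℕ :=
  Sum.elim (fun a => a.1) (fun a => 2 * n + 1 - a.1)

theorem columnOf_le_succ_of_adj {u v : WTV n} (h : (weldedGraph n W).Adj u v) :
    columnOf n v ≤ columnOf n u + 1 := by
  rcases u with a | a <;> rcases v with b | b <;> have := a.1.isLt <;>
    simp only [columnOf, Sum.elim_inl, Sum.elim_inr]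
  · rcases (h : treeAdj n a b) with h | h <;> omega
  · have : (a.1 : ℕ) = n ∧ (b.1 : ℕ) = n ∧ _ := h
    omega
  · have : (b.1 : ℕ) = n ∧ (a.1 : ℕ) = n ∧ _ := h
    omega
  · rcases (h : treeAdj n a b) with h | h <;> omega

theorem columnOf_le_add_length {u v : WTV n} (p : (weldedGraph n W).Walk u v) :
    columnOf n v ≤ columnOf n u + p.length := by
  induction p with
  | nil => simp
  | cons h _ ih => have := columnOf_le_succ_of_adj h; rw [Walk.length_cons]; omega

theorem exists_walk_source_inl (a : TV n) :
    ∃ p : (weldedGraph n W).Walk (wtSource n) (Sum.inl a), p.length = a.1 := by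
  obtain ⟨p, hp⟩ := TV.exists_walk_to_root a
  have hlen : (p.map (leftTreeHom n W)).reverse.length = a.1 := by simp [hp]
  exact ⟨_, hlen⟩

theorem exists_walk_source_inr (hW : ∀ j, ∃ i, W i j = true) (a : TV n) :
    ∃ p : (weldedGraph n W).Walk (wtSource n) (Sum.inr a), p.length = 2 * n + 1 - a.1 := by
  obtain ⟨b, hb, q, hq⟩ := TV.exists_walk_to_leaf a
  obtain ⟨i, hi⟩ := hW (leafIdx b)
  let ℓ : TV n := ⟨⟨n, n.lt_succ_self⟩, i⟩
  obtain ⟨p, hp⟩ := TV.exists_walk_to_root ℓ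
  -- stated through the homs so that the endpoints of `Walk.map` and `Walk.cons` agree
  -- syntactically, which `simp` needs to compute the length
  have weld : (weldedGraph n W).Adj (leftTreeHom n W ℓ) (rightTreeHom n W b) :=
    ⟨rfl, hb, by rwa [show leafIdx ℓ = i from Fin.ext (Nat.mod_eq_of_lt i.isLt)]⟩
  have hlen : ((p.map (leftTreeHom n W)).reverse.append
      (.cons weld (q.map (rightTreeHom n W)).reverse)).length = 2 * n + 1 - a.1 := by
    have := a.1.isLt
    simp only [Walk.length_append, Walk.length_reverse, Walk.length_map, Walk.length_cons, hp, hq,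
      ℓ]
    omega
  exact ⟨_, hlen⟩

theorem colIdx_eq_columnOf (hW : ∀ j, ∃ i, W i j = true) (v : WTV n) :
    colIdx n W v = columnOf n v := by
  obtain ⟨p, hp⟩ : ∃ p : (weldedGraph n W).Walk (wtSource n) v, p.length = columnOf n v := by
    rcases v with a | a
    · exact exists_walk_source_inl a
    · exact exists_walk_source_inr hW a
  obtain ⟨q, hq⟩ := p.reachable.exists_walk_length_eq_dist
  have hlower := columnOf_le_add_length q
  have hupper := dist_le p
  have hsource : columnOf n (wtSource n) = 0 := rfl
  unfold colIdx
  omega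

theorem inl_mem_columnUnion_iff (hW : ∀ j, ∃ i, W i j = true) (a : TV n) :
    Sum.inl a ∈ columnUnion n W k n ↔ k ≤ (a.1 : ℕ) := by
  have := a.1.isLt
  simp only [columnUnion, Set.mem_ofPred_eq, colIdx_eq_columnOf hW, columnOf, Sum.elim_inl]
  omega

theorem inr_notMem_columnUnion (hW : ∀ j, ∃ i, W i j = true) (a : TV n) :
    Sum.inr a ∉ columnUnion n W k n := by
  have := a.1.isLt
  simp only [columnUnion, Set.mem_ofPred_eq, colIdx_eq_columnOf hW, columnOf, Sum.elim_inr]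
  omega

theorem exists_eq_inl_of_mem_columnUnion (hW : ∀ j, ∃ i, W i j = true) {v : WTV n}
    (hv : v ∈ columnUnion n W k n) : ∃ a : TV n, v = Sum.inl a ∧ k ≤ (a.1 : ℕ) := by
  rcases v with a | a
  · exact ⟨a, rfl, (inl_mem_columnUnion_iff hW a).1 hv⟩
  · exact absurd hv (inr_notMem_columnUnion hW a)

abbrev middleForest (n : ℕ) (W : Fin (2^n) → Fin (2^n) → Bool) (k : ℕ) :
    SimpleGraph (columnUnion n W k n) :=
  (weldedGraph n W).induce (columnUnion n W k n)

/-- Right-tree vertices, which never lie in `C(k, n)`, get the junk value `0`. -/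
def branchIdx (k : ℕ) : WTV n → Fin (2^k) :=
  Sum.elim (TV.ancestorIdx k) (fun _ => 0)

def embedMiddle (hW : ∀ j, ∃ i, W i j = true) (hk : k ≤ n) (r : Fin (2^k)) (b : TV (n - k)) :
    columnUnion n W k n :=
  ⟨Sum.inl (TV.embedSubtree hk r b), (inl_mem_columnUnion_iff hW _).2 (Nat.le_add_left _ _)⟩

theorem branchIdx_embedMiddle (hW : ∀ j, ∃ i, W i j = true) (hk : k ≤ n) (r : Fin (2^k))
    (b : TV (n - k)) : branchIdx k (embedMiddle hW hk r b).1 = r :=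
  TV.ancestorIdx_embedSubtree hk r b

theorem branchIdx_eq_of_adj (hW : ∀ j, ∃ i, W i j = true) {u v : columnUnion n W k n}
    (h : (middleForest n W k).Adj u v) : branchIdx k u.1 = branchIdx k v.1 := by
  obtain ⟨a, ha, hka⟩ := exists_eq_inl_of_mem_columnUnion hW u.2
  obtain ⟨b, hb, hkb⟩ := exists_eq_inl_of_mem_columnUnion hW v.2
  have hab : treeAdj n a b := by simpa [ha, hb] using h
  simpa [ha, hb, branchIdx] using TV.ancestorIdx_eq_of_treeAdj hka hkb hab

theorem branchIdx_eq_of_reachable (hW : ∀ j, ∃ i, W i j = true) {u v : columnUnion n W k n}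
    (h : (middleForest n W k).Reachable u v) : branchIdx k u.1 = branchIdx k v.1 := by
  obtain ⟨p⟩ := h
  induction p with
  | nil => rfl
  | cons h _ ih => exact (branchIdx_eq_of_adj hW h).trans ih

theorem exists_middleForest_adj_parent (hW : ∀ j, ∃ i, W i j = true) (v : columnUnion n W k n)
    (hv : k < columnOf n v.1) :
    ∃ u, (middleForest n W k).Adj v u ∧ columnOf n u.1 + 1 = columnOf n v.1 := by
  obtain ⟨a, ha, -⟩ := exists_eq_inl_of_mem_columnUnion hW v.2
  simp only [ha, columnOf, Sum.elim_inl] at hv ⊢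
  refine ⟨⟨Sum.inl (TV.parent a), (inl_mem_columnUnion_iff hW _).2 ?_⟩, ?_, ?_⟩
  · simp only [TV.parent]; omega
  · simpa [ha] using TV.treeAdj_parent (by omega : 0 < (a.1 : ℕ))
  · simp only [Sum.elim_inl, TV.parent]; omega

theorem reachable_embedMiddle_wtRoot (hW : ∀ j, ∃ i, W i j = true) (hk : k ≤ n)
    (v : columnUnion n W k n) :
    (middleForest n W k).Reachable v (embedMiddle hW hk (branchIdx k v.1) (wtRoot (n - k))) := by
  obtain ⟨u, hu, p, -⟩ := (middleForest n W k).exists_walk_length_eq_of_descent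
    (fun v => columnOf n v.1 - k)
    (fun v hv => (exists_middleForest_adj_parent hW v (by omega)).imp
      fun _ h => ⟨h.1, by omega⟩) v
  convert p.reachable using 1
  obtain ⟨a, ha, hka⟩ := exists_eq_inl_of_mem_columnUnion hW u.2
  simp only [ha, columnOf, Sum.elim_inl] at hu
  rw [branchIdx_eq_of_reachable hW p.reachable]
  refine Subtype.ext ?_
  simp only [embedMiddle, ha, branchIdx, Sum.elim_inl]
  rw [← TV.eq_wtRoot (a := TV.posInSubtree k a) (by simp [TV.posInSubtree]; omega),
    TV.embedSubtree_posInSubtree hk hka]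

theorem middleForest_reachable_iff (hW : ∀ j, ∃ i, W i j = true) (hk : k ≤ n)
    (u v : columnUnion n W k n) :
    (middleForest n W k).Reachable u v ↔ branchIdx k u.1 = branchIdx k v.1 := by
  refine ⟨branchIdx_eq_of_reachable hW, fun h => ?_⟩
  have hv := reachable_embedMiddle_wtRoot hW hk v
  rw [← h] at hv
  exact (reachable_embedMiddle_wtRoot hW hk u).trans hv.symm

noncomputable def middleComponentEquiv (hW : ∀ j, ∃ i, W i j = true) (hk : k ≤ n) :
    (middleForest n W k).ConnectedComponent ≃ Fin (2^k) :=
  connectedComponentEquivOfReachableIff (fun v => branchIdx k v.1)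
    (fun r => ⟨_, branchIdx_embedMiddle hW hk r (wtRoot (n - k))⟩)
    (middleForest_reachable_iff hW hk)

theorem mem_supp_iff_branchIdx_eq (hW : ∀ j, ∃ i, W i j = true) (hk : k ≤ n)
    (c : (middleForest n W k).ConnectedComponent) (v : columnUnion n W k n) :
    v ∈ c.supp ↔ branchIdx k v.1 = middleComponentEquiv hW hk c :=
  mem_supp_iff_eq_connectedComponentEquivOfReachableIff (f := fun v => branchIdx k v.1) c v

noncomputable def middleComponentIso (hW : ∀ j, ∃ i, W i j = true) (hk : k ≤ n)
    (c : (middleForest n W k).ConnectedComponent) :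
    cbtGraph (n - k) ≃g (middleForest n W k).induce c.supp where
  toFun b := ⟨embedMiddle hW hk (middleComponentEquiv hW hk c) b,
    (mem_supp_iff_branchIdx_eq hW hk c _).2 (branchIdx_embedMiddle ..)⟩
  invFun x := Sum.elim (TV.posInSubtree k) (fun _ => wtRoot (n - k)) x.1.1
  left_inv b := TV.posInSubtree_embedSubtree hk _ b
  right_inv x := by
    obtain ⟨a, ha, hka⟩ := exists_eq_inl_of_mem_columnUnion hW x.1.2
    have hr := (mem_supp_iff_branchIdx_eq hW hk c _).1 x.2
    simp only [ha, branchIdx, Sum.elim_inl] at hr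
    refine Subtype.ext (Subtype.ext ?_)
    change Sum.inl (TV.embedSubtree hk (middleComponentEquiv hW hk c)
      (Sum.elim (TV.posInSubtree k) (fun _ => wtRoot (n - k)) x.1.1)) = x.1.1
    rw [← hr, ha, Sum.elim_inl, TV.embedSubtree_posInSubtree hk hka]
  map_rel_iff' := TV.treeAdj_embedSubtree_iff hk _ _ _

end Welded

theorem welded_trees_induced_middle_forest_general (n : ℕ)
    (W : Fin (2^n) → Fin (2^n) → Bool) (hW : IsWeldedData n W)
    (k : ℕ) (hk2 : k ≤ n) :
    Nat.card ((weldedGraph n W).induce (columnUnion n W k n)).ConnectedComponent = 2^k ∧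
    (∀ c : ((weldedGraph n W).induce (columnUnion n W k n)).ConnectedComponent,
      Nonempty
        ((((weldedGraph n W).induce (columnUnion n W k n)).induce c.supp) ≃g
          cbtGraph (n - k))) := by
  have hleaf := hW.exists_weld_left
  refine ⟨?_, fun c => ⟨(middleComponentIso hleaf hk2 c).symm⟩⟩
  rw [Nat.card_congr (middleComponentEquiv hleaf hk2), Nat.card_fin]

/-- For `1 ≤ k ≤ n`, the subgraph of a welded-trees graph induced by
`C(k, n)` (all vertices at distance between `k` and `n` from `source`) is a disjoint
union of exactly `2^k` trees, each of which is a complete binary tree of height `n - k`: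
it has exactly `2^k` connected components, and the subgraph induced by each component is
isomorphic to the complete binary tree of height `n - k`. -/
theorem welded_trees_induced_middle_forest (n : ℕ) (hn : 1 ≤ n)
    (W : Fin (2^n) → Fin (2^n) → Bool) (hW : IsWeldedData n W)
    (k : ℕ) (hk1 : 1 ≤ k) (hk2 : k ≤ n) :
    Nat.card ((weldedGraph n W).induce (columnUnion n W k n)).ConnectedComponent = 2^k ∧
    (∀ c : ((weldedGraph n W).induce (columnUnion n W k n)).ConnectedComponent,
      Nonempty
        ((((weldedGraph n W).induce (columnUnion n W k n)).induce c.supp) ≃g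
          cbtGraph (n - k))) :=
  welded_trees_induced_middle_forest_general n W hW k hk2
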